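/- Let x ∈ V(ℤ) with x ∉ 𝔗' ∪ 𝔘', and suppose Δ(x) ≤ Δ(𝒱ᵢ(x)) for all i ∈ {1,2,3}. Then Δ(x) ≤ Δ(𝒱ⱼ(𝒱ᵢ(x))) for all i, j ∈ {1,2,3}; that is, x is a last vertex of its mapping-class-group orbit. -/

import Mathlib

/-- The Vieta involution in coordinate `i`:
`x ↦ Function.update x i (αᵢ − xⱼxₗ − xᵢ)` where `j = i+1`, `l = i+2` (mod 3). -/
def vAct (α : Fin 3 → ℤ) (i : Fin 3) (x : Fin 3 → ℤ) : Fin 3 → ℤ :=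
  Function.update x i (α i - x (i + 1) * x (i + 2) - x i)

/-- Membership in the integral cubic surface `V(ℤ)`. -/
def onV (α : Fin 3 → ℤ) (β : ℤ) (x : Fin 3 → ℤ) : Prop :=
  x 0 ^ 2 + x 1 ^ 2 + x 2 ^ 2 + x 0 * x 1 * x 2
    - α 0 * x 0 - α 1 * x 1 - α 2 * x 2 - β = 0

/-- The height function `Δ(x) = |x₁| + |x₂| + |x₃|`. -/
def delta (x : Fin 3 → ℤ) : ℤ := |x 0| + |x 1| + |x 2|

/-- Membership in the finite exceptional set `𝔗`. -/
def inT (α : Fin 3 → ℤ) (β : ℤ) (x : Fin 3 → ℤ) : Prop :=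
  onV α β x ∧ ∃ σ : Equiv.Perm (Fin 3),
    |x (σ 0)| ≤ 1 ∨ |x (σ 1) * x (σ 2)| ≤ max (3 * |α (σ 0)|) 4

/-- Membership in the exceptional set `𝔘`. -/
def inU (α : Fin 3 → ℤ) (β : ℤ) (x : Fin 3 → ℤ) : Prop :=
  onV α β x ∧ ¬ inT α β x ∧ ∃ σ : Equiv.Perm (Fin 3),
    |x (σ 0)| = 2 ∧ delta (vAct α (σ 1) x) ≤ delta x ∧
      delta (vAct α (σ 2) x) ≤ delta x

/-- `y` lies in the `Γ`-orbit of `x`: it is obtained from `x` by a finite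
sequence of Vieta involutions. -/
def gammaRel (α : Fin 3 → ℤ) (x y : Fin 3 → ℤ) : Prop :=
  ∃ L : List (Fin 3), y = L.foldl (fun z i => vAct α i z) x

/-- `y` lies in the `Γ₀`-orbit (mapping class group orbit) of `x`: it is
obtained from `x` by an even-length sequence of Vieta involutions. -/
def gamma0Rel (α : Fin 3 → ℤ) (x y : Fin 3 → ℤ) : Prop :=
  ∃ L : List (Fin 3), L.length % 2 = 0 ∧ y = L.foldl (fun z i => vAct α i z) x

/-- `y` is a descendent of `x`: obtained by a finite sequence of Vieta
involutions along which `Δ` is non-increasing at every step. -/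
def descendent (α : Fin 3 → ℤ) (x y : Fin 3 → ℤ) : Prop :=
  ∃ L : List (Fin 3), y = L.foldl (fun z i => vAct α i z) x ∧
    ∀ t < L.length,
      delta ((L.take (t + 1)).foldl (fun z i => vAct α i z) x) ≤
        delta ((L.take t).foldl (fun z i => vAct α i z) x)

/-- Membership in `𝔗' = {𝒱ᵢ(x), 𝒱ⱼ𝒱ᵢ(x) : x ∈ 𝔗}`. -/
def inT' (α : Fin 3 → ℤ) (β : ℤ) (x : Fin 3 → ℤ) : Prop :=
  ∃ y, inT α β y ∧
    ((∃ i, x = vAct α i y) ∨ ∃ i j, x = vAct α j (vAct α i y))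

/-- Membership in `𝔘' = {𝒱ᵢ(x), 𝒱ⱼ𝒱ᵢ(x) : x ∈ 𝔘}`. -/
def inU' (α : Fin 3 → ℤ) (β : ℤ) (x : Fin 3 → ℤ) : Prop :=
  ∃ y, inU α β y ∧
    ((∃ i, x = vAct α i y) ∨ ∃ i j, x = vAct α j (vAct α i y))

/-! Put `y = 𝒱ᵢ(x)`. If `Δ(𝒱ⱼ(y)) < Δ(x)` for some `j ≠ i`, then neither `𝒱ᵢ` nor `𝒱ⱼ`
increases `Δ` at `y`. As `y ∉ 𝔗 ∪ 𝔘`, the third coordinate `y_l` has `|y_l| ≥ 3` and every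
product `yⱼyₗ` exceeds `3|αᵢ|`; a move `𝒱ᵢ` that does not increase `Δ` then forces
`|yⱼ| < |yᵢ|`, and symmetrically `𝒱ⱼ` forces `|yᵢ| < |yⱼ|`. -/

lemma vAct_vAct (α : Fin 3 → ℤ) (i : Fin 3) (x : Fin 3 → ℤ) : vAct α i (vAct α i x) = x := by
  fin_cases i <;> funext k <;> fin_cases k <;> simp [vAct, Function.update]

lemma onV_vAct {α : Fin 3 → ℤ} {β : ℤ} {x : Fin 3 → ℤ} (hx : onV α β x) (i : Fin 3) :
    onV α β (vAct α i x) := by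
  unfold onV at hx
  fin_cases i <;> simp [onV, vAct, Function.update] <;> linear_combination hx

lemma delta_update (x : Fin 3 → ℤ) (i : Fin 3) (v : ℤ) :
    delta (Function.update x i v) = delta x - |x i| + |v| := by
  fin_cases i <;> simp [delta, Function.update] <;> ring

lemma delta_vAct_le_iff (α : Fin 3 → ℤ) (i : Fin 3) (y : Fin 3 → ℤ) :
    delta (vAct α i y) ≤ delta y ↔ |α i - y (i + 1) * y (i + 2) - y i| ≤ |y i| := by
  rw [vAct, delta_update]
  constructor <;> intro h <;> linarith

lemma abs_lt_of_abs_vieta_le {A a b c : ℤ} (hA : 3 * |A| < |b * c|) (hc : 3 ≤ |c|)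
    (h : |A - b * c - a| ≤ |a|) : |b| < |a| := by
  have hbc : |b * c| ≤ |A| + 2 * |a| :=
    calc |b * c| = |(A - a) - (A - b * c - a)| := by ring_nf
      _ ≤ |A - a| + |A - b * c - a| := abs_sub _ _
      _ ≤ (|A| + |a|) + |a| := add_le_add (abs_sub A a) h
      _ = |A| + 2 * |a| := by ring
  have hb : 3 * |b| ≤ |b * c| := by
    rw [abs_mul]; nlinarith [abs_nonneg b]
  linarith

section

variable {α : Fin 3 → ℤ} {β : ℤ} {y : Fin 3 → ℤ}

lemma bounds_of_not_inT (hy : onV α β y) (hT : ¬ inT α β y) (i : Fin 3) :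
    2 ≤ |y i| ∧ 3 * |α i| < |y (i + 1) * y (i + 2)| := by
  have h : ¬ (|y i| ≤ 1 ∨ |y (i + 1) * y (i + 2)| ≤ max (3 * |α i|) 4) := by
    intro h'
    refine hT ⟨hy, Equiv.addRight i, ?_⟩
    simpa only [Equiv.coe_addRight, zero_add, add_zero, add_comm _ i] using h'
  push Not at h
  exact ⟨by omega, (le_max_left _ _).trans_lt h.2⟩

lemma not_descent_succ (hy : onV α β y) (hT : ¬ inT α β y) (hU : ¬ inU α β y) (i : Fin 3)
    (hi : delta (vAct α i y) ≤ delta y) (hi' : delta (vAct α (i + 1) y) ≤ delta y) : False := by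
  have hl : |y (i + 2)| ≠ 2 := by
    intro h2
    refine hU ⟨hy, hT, Equiv.addRight (i + 2), ?_⟩
    have h1 : 1 + (i + 2) = i := by fin_cases i <;> rfl
    have h2' : 2 + (i + 2) = i + 1 := by fin_cases i <;> rfl
    simpa only [Equiv.coe_addRight, zero_add, h1, h2'] using ⟨h2, hi, hi'⟩
  have hl3 : 3 ≤ |y (i + 2)| := by
    have := (bounds_of_not_inT hy hT (i + 2)).1
    omega
  have hsucc : i + 1 + 1 = i + 2 := by fin_cases i <;> rfl
  have hsucc' : i + 1 + 2 = i := by fin_cases i <;> rfl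
  have hA := (bounds_of_not_inT hy hT i).2
  have hA' := (bounds_of_not_inT hy hT (i + 1)).2
  rw [delta_vAct_le_iff] at hi hi'
  rw [hsucc, hsucc'] at hi' hA'
  rw [mul_comm (y (i + 2)) (y i)] at hi' hA'
  exact lt_asymm (abs_lt_of_abs_vieta_le hA hl3 hi) (abs_lt_of_abs_vieta_le hA' hl3 hi')

lemma not_two_descents (hy : onV α β y) (hT : ¬ inT α β y) (hU : ¬ inU α β y) {i j : Fin 3}
    (hij : i ≠ j) (hi : delta (vAct α i y) ≤ delta y) (hj : delta (vAct α j y) ≤ delta y) :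
    False := by
  have hadj : j = i + 1 ∨ i = j + 1 := by
    revert hij; fin_cases i <;> fin_cases j <;> decide
  rcases hadj with rfl | rfl
  · exact not_descent_succ hy hT hU i hi hj
  · exact not_descent_succ hy hT hU j hj hi

end

/-- If `x ∈ V(ℤ) \ (𝔗' ∪ 𝔘')` is a last vertex for `Γ`, then it is a last
vertex for the mapping class group action. -/
theorem cor_3_4_i (α : Fin 3 → ℤ) (β : ℤ) (x : Fin 3 → ℤ)
    (hx : onV α β x) (hT : ¬ inT' α β x) (hU : ¬ inU' α β x)
    (hlast : ∀ i : Fin 3, delta x ≤ delta (vAct α i x)) :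
    ∀ i j : Fin 3, delta x ≤ delta (vAct α j (vAct α i x)) := by
  intro i j
  rcases eq_or_ne i j with rfl | hij
  · rw [vAct_vAct]
  by_contra! hlt
  have hxy : x = vAct α i (vAct α i x) := (vAct_vAct α i x).symm
  refine not_two_descents (onV_vAct hx i) (fun h => hT ⟨_, h, .inl ⟨i, hxy⟩⟩)
    (fun h => hU ⟨_, h, .inl ⟨i, hxy⟩⟩) hij ?_ (hlt.le.trans (hlast i))
  rw [← hxy]
  exact hlast i
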